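/- arXiv:2105.11719 — 2 statements merged into one kernel-verified Lean document; each statement's English description precedes it below -/
import Mathlib

section
/- Let N be a prime number and let k ∈ ℤ/Nℤ with k ≠ 2 and k ≠ −2. Let n be the least positive integer such that the constant n-tuple (k, …, k) satisfies M_n(k, …, k) = Id or = −Id. Then n divides (N−1)/2 or n divides (N+1)/2. -/
open Matrix

/-- `Mmat [a₁, …, aₙ]` is the product `[[aₙ,-1],[1,0]] ⋯ [[a₁,-1],[1,0]]`. -/
def Mmat {R : Type*} [CommRing R] : List R → Matrix (Fin 2) (Fin 2) R
  | [] => 1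
  | a :: t => Mmat t * !![a, -1; 1, 0]

/-- A tuple is a solution of (E_N) if its matrix is `Id` or `-Id`. -/
def IsSolution {R : Type*} [CommRing R] (l : List R) : Prop :=
  Mmat l = 1 ∨ Mmat l = -1

/-- The sum `(a₁,…,aₙ) ⊕ (b₁,…,bₘ) = (a₁+bₘ, a₂,…,aₙ₋₁, aₙ+b₁, b₂,…,bₘ₋₁)`. -/
def oplus {R : Type*} [CommRing R] (a b : List R) : List R :=
  List.ofFn (fun i : Fin (a.length + b.length - 2) =>
    if (i : ℕ) = 0 then a.getD 0 0 + b.getD (b.length - 1) 0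
    else if (i : ℕ) < a.length - 1 then a.getD (i : ℕ) 0
    else if (i : ℕ) = a.length - 1 then a.getD (a.length - 1) 0 + b.getD 0 0
    else b.getD ((i : ℕ) - a.length + 1) 0)

/-- Two tuples are equivalent if one is a cyclic permutation of the other or of
its reversal. -/
def TupleEquiv {R : Type*} (a b : List R) : Prop :=
  (∃ k, b = a.rotate k) ∨ (∃ k, b = a.reverse.rotate k)

/-- A solution `c` (of size ≥ 3) is reducible if `c ∼ a ⊕ b` with `b` a solution,
`a` of size ≥ 3 and `b` of size ≥ 3. -/
def Reducible {R : Type*} [CommRing R] (c : List R) : Prop :=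
  ∃ a b : List R, 3 ≤ a.length ∧ 3 ≤ b.length ∧ IsSolution b ∧
    TupleEquiv c (oplus a b)

/-- The alternating tuple `(k, -k, k, -k, …)` of length `n`. -/
def altList {R : Type*} [CommRing R] (n : ℕ) (k : R) : List R :=
  List.ofFn (fun i : Fin n => if (i : ℕ) % 2 = 0 then k else -k)

/-- Continuants: `K₋₁ = 0`, `K₀ = 1`,
`Kₙ(x₁,…,xₙ) = x₁·Kₙ₋₁(x₂,…,xₙ) - Kₙ₋₂(x₃,…,xₙ)`. -/
def contK {R : Type*} [CommRing R] : List R → R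
  | [] => 1
  | [x] => x
  | x :: y :: t => x * contK (y :: t) - contK t

/-!
The matrix `A = !![k, -1; 1, 0]` has characteristic polynomial `X² - kX + 1`, whose roots `λ, λ⁻¹`
(in an algebraic closure of `𝔽_N`) are distinct because `k ≠ ±2`. Diagonalising `A`, one gets
`A^m = ±Id ↔ λ^m = ±1 ↔ (λ²)^m = 1`, so the minimal size `n` is the order of `λ²`. Since `k` is fixed
by Frobenius, `λ^N` is again a root, i.e. `λ^N ∈ {λ, λ⁻¹}`; hence `λ^(N-1) = 1` or `λ^(N+1) = 1`, and
`λ²` has order dividing `(N-1)/2` or `(N+1)/2`.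
-/

theorem Mmat_replicate {R : Type*} [CommRing R] (k : R) (m : ℕ) :
    Mmat (List.replicate m k) = !![k, -1; 1, 0] ^ m := by
  induction m with
  | zero => rfl
  | succ m ih => rw [List.replicate_succ, Mmat, ih, pow_succ]

theorem Mmat_map {R S : Type*} [CommRing R] [CommRing S] (f : R →+* S) (l : List R) :
    Mmat (l.map f) = (Mmat l).map f := by
  induction l with
  | nil => simp [Mmat]
  | cons a t ih =>
    rw [List.map_cons, Mmat, Mmat, ih, Matrix.map_mul]
    congr 1
    ext i j
    fin_cases i <;> fin_cases j <;> simp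

theorem isSolution_map_iff {R S : Type*} [CommRing R] [CommRing S] {f : R →+* S}
    (hf : Function.Injective f) (l : List R) : IsSolution (l.map f) ↔ IsSolution l := by
  simp only [IsSolution, Mmat_map, ← (Matrix.map_injective hf).eq_iff, Matrix.map_one _ f.map_zero f.map_one,
    Matrix.map_neg _ f.map_neg]

theorem orderOf_eq_of_isLeast {M : Type*} [Monoid M] {x : M} {n : ℕ}
    (hn : IsLeast {m | 0 < m ∧ x ^ m = 1} n) : orderOf x = n :=
  (orderOf_eq_iff hn.1.1).2 ⟨hn.1.2, fun _ hm hm0 h => (hn.2 ⟨hm0, h⟩).not_gt hm⟩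

open Polynomial in
theorem exists_mul_eq_one_add_eq {K : Type*} [Field K] [IsAlgClosed K] (a : K) :
    ∃ l u : K, l * u = 1 ∧ l + u = a := by
  obtain ⟨l, hl⟩ := IsAlgClosed.exists_root (X ^ 2 - C a * X + 1 : K[X])
    (by rw [show (X ^ 2 - C a * X + 1 : K[X]).degree = 2 by compute_degree!]; decide)
  refine ⟨l, a - l, ?_, by ring⟩
  simp only [IsRoot, eval_add, eval_sub, eval_pow, eval_mul, eval_C, eval_X, eval_one] at hl
  linear_combination -hl

section Companion

variable {K : Type*} [Field K] {a l u : K}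

theorem ne_of_add_ne_two_of_add_ne_neg_two (hlu : l * u = 1) (h2 : l + u ≠ 2) (h2' : l + u ≠ -2) :
    l ≠ u := by
  rintro rfl
  rcases mul_self_eq_one_iff.1 hlu with rfl | rfl
  · exact h2 (by norm_num)
  · exact h2' (by norm_num)

theorem companion_mul_eigenbasis (hlu : l * u = 1) (hsum : l + u = a) :
    !![a, -1; 1, 0] * !![l, u; 1, 1] = !![l, u; 1, 1] * diagonal ![l, u] := by
  have hl : a * l - 1 = l * l := by linear_combination hlu - l * hsum
  have hu : a * u - 1 = u * u := by linear_combination hlu - u * hsum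
  simp [diagonal_fin_two, ← sub_eq_add_neg, hl, hu]

theorem companion_pow_eq_scalar_iff (hlu : l * u = 1) (hsum : l + u = a) (hne : l ≠ u)
    (m : ℕ) (c : K) :
    !![a, -1; 1, 0] ^ m = scalar (Fin 2) c ↔ l ^ m = c ∧ u ^ m = c := by
  set V : Matrix (Fin 2) (Fin 2) K := !![l, u; 1, 1]
  have hV : IsUnit V := by
    rw [isUnit_iff_isUnit_det, det_fin_two_of, mul_one, mul_one]
    exact (sub_ne_zero.2 hne).isUnit
  have hconj : !![a, -1; 1, 0] ^ m * V = V * diagonal ![l ^ m, u ^ m] := by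
    have hD : (![l, u] ^ m : Fin 2 → K) = ![l ^ m, u ^ m] := by ext i; fin_cases i <;> rfl
    rw [← hD, ← diagonal_pow]
    exact ((show SemiconjBy V (diagonal ![l, u]) !![a, -1; 1, 0] from
      (companion_mul_eigenbasis hlu hsum).symm).pow_right m).eq.symm
  calc !![a, -1; 1, 0] ^ m = scalar (Fin 2) c
      ↔ !![a, -1; 1, 0] ^ m * V = scalar (Fin 2) c * V := hV.mul_left_inj.symm
    _ ↔ V * diagonal ![l ^ m, u ^ m] = V * scalar (Fin 2) c := by
      rw [hconj, (scalar_commute c (Commute.all c) V).eq]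
    _ ↔ diagonal ![l ^ m, u ^ m] = scalar (Fin 2) c := hV.mul_right_inj
    _ ↔ l ^ m = c ∧ u ^ m = c := by
      rw [scalar_apply, diagonal_eq_diagonal_iff, Fin.forall_fin_two]
      rfl

theorem companion_pow_eq_one_or_neg_one_iff (hlu : l * u = 1) (hsum : l + u = a) (hne : l ≠ u)
    (m : ℕ) : !![a, -1; 1, 0] ^ m = 1 ∨ !![a, -1; 1, 0] ^ m = -1 ↔ (l ^ 2) ^ m = 1 := by
  have hprod : l ^ m * u ^ m = 1 := by rw [← mul_pow, hlu, one_pow]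
  rw [← map_one (scalar (Fin 2)), ← map_neg, companion_pow_eq_scalar_iff hlu hsum hne,
    companion_pow_eq_scalar_iff hlu hsum hne, ← pow_mul, mul_comm, pow_mul, sq_eq_one_iff]
  refine or_congr (and_iff_left_of_imp fun h => ?_) (and_iff_left_of_imp fun h => ?_)
  · linear_combination hprod - u ^ m * h
  · linear_combination u ^ m * h - hprod

theorem isSolution_replicate_iff (hlu : l * u = 1) (hsum : l + u = a) (hne : l ≠ u) (m : ℕ) :
    IsSolution (List.replicate m a) ↔ (l ^ 2) ^ m = 1 := by
  rw [IsSolution, Mmat_replicate, companion_pow_eq_one_or_neg_one_iff hlu hsum hne]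

variable (p : ℕ) [Fact p.Prime] [CharP K p]

theorem pow_char_eq_or_eq (ha : a ^ p = a) (hlu : l * u = 1) (hsum : l + u = a) :
    l ^ p = l ∨ l ^ p = u := by
  have hl : l ^ 2 + 1 = a * l := by linear_combination l * hsum - hlu
  have hlp : (l ^ p) ^ 2 + 1 = a * l ^ p := by
    have := congrArg (· ^ p) hl
    simpa only [add_pow_char, mul_pow, ha, one_pow, ← pow_mul, mul_comm 2 p] using this
  have : (l ^ p - l) * (l ^ p - u) = 0 := by linear_combination hlp + hlu - l ^ p * hsum
  simpa only [mul_eq_zero, sub_eq_zero] using this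

theorem sq_pow_half_eq_one (ha : a ^ p = a) (hlu : l * u = 1) (hsum : l + u = a) :
    (l ^ 2) ^ ((p - 1) / 2) = 1 ∨ (l ^ 2) ^ ((p + 1) / 2) = 1 := by
  rcases (Fact.out : p.Prime).eq_two_or_odd' with rfl | hodd
  · simp
  rw [← pow_mul, ← pow_mul, Nat.two_mul_div_two_of_even (Nat.Odd.sub_odd hodd odd_one),
    Nat.two_mul_div_two_of_even hodd.add_one]
  rcases pow_char_eq_or_eq p ha hlu hsum with h | h
  · left
    have hl0 : l ≠ 0 := left_ne_zero_of_mul_eq_one hlu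
    rw [pow_sub₀ l hl0 (n := 1) hodd.pos, h, pow_one, mul_inv_cancel₀ hl0]
  · right
    rw [pow_succ', h, hlu]

end Companion

theorem monomial_minimal_size_dvd (N : ℕ) (hp : N.Prime) (k : ZMod N)
    (hk2 : k ≠ 2) (hk2' : k ≠ -2)
    (n : ℕ) (hn : IsLeast {m : ℕ | 0 < m ∧ IsSolution (List.replicate m k)} n) :
    n ∣ (N - 1) / 2 ∨ n ∣ (N + 1) / 2 := by
  have := Fact.mk hp
  let f := algebraMap (ZMod N) (AlgebraicClosure (ZMod N))
  obtain ⟨l, u, hlu, hsum⟩ := exists_mul_eq_one_add_eq (f k)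
  have hne : l ≠ u := ne_of_add_ne_two_of_add_ne_neg_two hlu
    (by rw [hsum, ← map_ofNat f 2]; exact f.injective.ne hk2)
    (by rw [hsum, ← map_ofNat f 2, ← map_neg]; exact f.injective.ne hk2')
  have hsol (m : ℕ) : IsSolution (List.replicate m k) ↔ (l ^ 2) ^ m = 1 := by
    rw [← isSolution_map_iff f.injective, List.map_replicate, isSolution_replicate_iff hlu hsum hne]
  have hord : orderOf (l ^ 2) = n := orderOf_eq_of_isLeast (by simpa only [hsol] using hn)
  have ha : f k ^ N = f k := by rw [← map_pow, ZMod.pow_card]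
  rw [← hord]
  exact (sq_pow_half_eq_one N ha hlu hsum).imp orderOf_dvd_of_pow_eq_one orderOf_dvd_of_pow_eq_one
end

section
/- Let N ≥ 2, let n ≥ 5 be an odd integer, and let a, b, k ∈ ℤ/Nℤ. If the n-tuple (a, k, −k, k, −k, …, −k, k, b), whose first entry is a, whose last entry is b, and whose n−2 middle entries alternate k, −k, k, …, k starting and ending with k, is a solution of (E_N), then a = b and a·(k + a) = 2 in ℤ/Nℤ. -/
open Matrix

/-!
The matrix of an alternating block `(k, -k, …, k)` of odd length has the shape `!![p, q; -q, r]`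
with `p + r = -k q`: this holds for the single entry `(k)`, and is preserved when a pair
`(k, -k)` is put in front. Sandwiching such a matrix between the matrices of `a` and `b` and
comparing with `±1` entry by entry gives `p = ∓1`, `q = ±a`, `r = ±(a² - 1)` and `a = b`; the trace
relation then becomes `a² + k a - 2 = 0`.
-/

theorem Mmat_append {R : Type*} [CommRing R] (l₁ l₂ : List R) :
    Mmat (l₁ ++ l₂) = Mmat l₂ * Mmat l₁ := by
  induction l₁ with
  | nil => simp [Mmat]
  | cons x t ih => simp [Mmat, ih, mul_assoc]

theorem Mmat_cons_append_singleton {R : Type*} [CommRing R] (a b : R) (l : List R) :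
    Mmat (a :: (l ++ [b])) = !![b, -1; 1, 0] * Mmat l * !![a, -1; 1, 0] := by
  simp [Mmat, Mmat_append]

theorem altList_add_two {R : Type*} [CommRing R] (n : ℕ) (k : R) :
    altList (n + 2) k = k :: -k :: altList n k := by
  simp [altList, List.ofFn_succ, add_assoc]

theorem exists_Mmat_altList_odd {R : Type*} [CommRing R] (k : R) (m : ℕ) :
    ∃ p q r : R, Mmat (altList (2 * m + 1) k) = !![p, q; -q, r] ∧ p + r = -(k * q) := by
  induction m with
  | zero => exact ⟨k, -1, 0, by simp [altList, Mmat], by ring⟩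
  | succ m ih =>
    obtain ⟨p, q, r, hM, hpr⟩ := ih
    refine ⟨-(k ^ 2 + 1) * p + q * k, p * k - q, -q * k - r, ?_, by linear_combination -hpr⟩
    rw [show 2 * (m + 1) + 1 = 2 * m + 1 + 2 by ring, altList_add_two]
    obtain rfl : r = -(k * q) - p := by linear_combination hpr
    simp only [Mmat, hM, mul_fin_two]
    ring_nf

theorem eq_and_mul_eq_two_of_sandwich_eq_smul_one {R : Type*} [CommRing R] {a b k p q r ε : R}
    (hε : ε * ε = 1) (hpr : p + r = -(k * q))
    (h : !![b, -1; 1, 0] * !![p, q; -q, r] * !![a, -1; 1, 0] =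
      ε • (1 : Matrix (Fin 2) (Fin 2) R)) :
    a = b ∧ a * (k + a) = 2 := by
  obtain ⟨⟨h00, h01⟩, h10, h11⟩ :
      ((b * p + q) * a + (b * q - r) = ε ∧ -q - b * p = 0) ∧ p * a + q = 0 ∧ -p = ε := by
    simpa [← Matrix.ext_iff, Fin.forall_fin_two, sub_eq_add_neg] using h
  have hp : p = -ε := by linear_combination -h11
  have hq : q = ε * a := by linear_combination h10 + a * h11
  have hr : r = ε * (a ^ 2 - 1) := by linear_combination -h00 + b * h10 + a * hq
  refine ⟨by linear_combination -(a - b) * hε - ε * (h10 + h01) - ε * (a - b) * h11, ?_⟩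
  linear_combination ε * hpr - ε * hp - ε * hr - k * ε * hq - (a ^ 2 + k * a - 2) * hε

theorem dynomial_ends_odd_general (N : ℕ) (n : ℕ) (hn : 5 ≤ n) (hodd : Odd n)
    (a b k : ZMod N)
    (h : IsSolution (a :: (altList (n - 2) k ++ [b]))) :
    a = b ∧ a * (k + a) = 2 := by
  obtain ⟨m, rfl⟩ := hodd
  obtain ⟨p, q, r, hM, hpr⟩ := exists_Mmat_altList_odd k (m - 1)
  rw [show 2 * m + 1 - 2 = 2 * (m - 1) + 1 by omega, IsSolution,
    Mmat_cons_append_singleton, hM] at h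
  rcases h with h | h
  · exact eq_and_mul_eq_two_of_sandwich_eq_smul_one (one_mul 1) hpr (by rwa [one_smul])
  · exact eq_and_mul_eq_two_of_sandwich_eq_smul_one (ε := -1) (by ring) hpr
      (by rwa [neg_smul, one_smul])

theorem dynomial_ends_odd (N : ℕ) (hN : 2 ≤ N) (n : ℕ) (hn : 5 ≤ n) (hodd : Odd n)
    (a b k : ZMod N)
    (h : IsSolution (a :: (altList (n - 2) k ++ [b]))) :
    a = b ∧ a * (k + a) = 2 :=
  dynomial_ends_odd_general N n hn hodd a b k h
end
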